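/- L²-norm error estimate (Theorem 8.1): let t_0 = min{k,3}. If the exact solution u is sufficiently regular (u ∈ H⁴(Ω) if k = 2, u ∈ H^{k+1}(Ω) otherwise) and the dual biharmonic problem Δ²ψ = e_0 with homogeneous Dirichlet–Neumann boundary conditions satisfies the H⁴ regularity estimate ‖ψ‖_4 ≤ C‖e_0‖, then ‖Q_0 u − u_0‖ ≤ C h^{k+t_0−2} ( ‖u‖_{k+1} + δ_{k,2} ‖u‖_4 ). -/
import Mathlib


/-- **Theorem 8.1, L² error estimate.**  Let `t₀ = min{k,3}` and let
`u_h = {u₀, u_b, u_g}` be the weak Galerkin solution of order `k ≥ 2`, with error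
`e_h = Q_h u − u_h` whose first component is `e₀ = Q₀u − u₀`.  Write `e0N = ‖e₀‖`,
`eN = |||e_h|||`, `nu1 = ‖u‖_{k+1}`, `nu4 = ‖u‖_4`.  Assume the duality identity (5.4)
`‖e₀‖² = φ_u(Q_hψ) − φ_ψ(e_h)` where `ψ` solves the dual biharmonic problem with the `H⁴`
regularity `‖ψ‖₄ ≤ C‖e₀‖`, together with the bounds `|φ_ψ(e_h)| ≤ C h^{t₀−1}‖e₀‖|||e_h|||`,
`|φ_u(Q_hψ)| ≤ C h^{k+t₀−2}(‖u‖_{k+1}+δ_{k,2}‖u‖₄)‖e₀‖` and the `H²` estimate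
`|||e_h||| ≤ C h^{k−1}(‖u‖_{k+1}+δ_{k,2}‖u‖₄)`.  Then
`‖Q₀u − u₀‖ ≤ C h^{k+t₀−2} (‖u‖_{k+1} + δ_{k,2} ‖u‖_4)`. -/
theorem stmt_17 (k : ℕ) (hk : 2 ≤ k) (h : ℝ) (hh : 0 < h)
    (C1 C2 C3 : ℝ) (hC1 : 0 < C1) (hC2 : 0 < C2) (hC3 : 0 < C3)
    (nu1 nu4 : ℝ) (hnu1 : 0 ≤ nu1) (hnu4 : 0 ≤ nu4)  -- ‖u‖_{k+1} and ‖u‖_4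
    (e0N : ℝ) (he0N : 0 ≤ e0N)                        -- ‖Q₀u − u₀‖
    (eN : ℝ) (heN : 0 ≤ eN)                           -- |||Q_h u − u_h|||
    (Phiu Phipsi : ℝ)                                 -- φ_u(Q_h ψ) and φ_ψ(e_h)
    -- duality identity (5.4):
    (hdual : e0N ^ 2 = Phiu - Phipsi)
    -- bound (phi-psi-eh), using the H⁴ regularity ‖ψ‖₄ ≤ C‖e₀‖:
    (hpsi : |Phipsi| ≤ C1 * h ^ (min k 3 - 1) * e0N * eN)
    -- bound (raining.400):
    (hu : |Phiu| ≤ C2 * h ^ (k + min k 3 - 2) * (nu1 + (if k = 2 then nu4 else 0)) * e0N)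
    -- the H² error estimate (Theorem 6.6):
    (hH2 : eN ≤ C3 * h ^ (k - 1) * (nu1 + (if k = 2 then nu4 else 0))) :
    ∃ C > 0, e0N ≤ C * h ^ (k + min k 3 - 2) * (nu1 + (if k = 2 then nu4 else 0)) := by

  set N := nu1 + (if k = 2 then nu4 else 0) with hN
  have hN0 : 0 ≤ N := by
    have : (0:ℝ) ≤ (if k = 2 then nu4 else 0) := by positivity
    simp [hN]; linarith
  have hexp : (min k 3 - 1) + (k - 1) = k + min k 3 - 2 := by omega
  refine ⟨C2 + C1 * C3, by positivity, ?_⟩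
  rcases eq_or_lt_of_le he0N with h0 | h0
  · have : e0N = 0 := h0.symm
    rw [this]; positivity
  · -- e0N^2 ≤ (C2 + C1*C3) * h^(k+min k 3-2) * N * e0N
    have key : e0N ^ 2 ≤ (C2 + C1 * C3) * h ^ (k + min k 3 - 2) * N * e0N := by
      have h1 : Phiu - Phipsi ≤ |Phiu| + |Phipsi| := by
        have := abs_le.mp (le_refl |Phiu|)
        have h2 := le_abs_self Phiu
        have h3 := neg_abs_le Phipsi
        linarith
      have h4 : C1 * h ^ (min k 3 - 1) * e0N * eN ≤
          C1 * h ^ (min k 3 - 1) * e0N * (C3 * h ^ (k - 1) * N) := by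
        apply mul_le_mul_of_nonneg_left hH2; positivity
      have h5 : C1 * h ^ (min k 3 - 1) * e0N * (C3 * h ^ (k - 1) * N)
          = C1 * C3 * h ^ (k + min k 3 - 2) * N * e0N := by
        rw [← hexp, pow_add]; ring
      rw [hdual]
      calc Phiu - Phipsi ≤ |Phiu| + |Phipsi| := h1
        _ ≤ C2 * h ^ (k + min k 3 - 2) * N * e0N
            + C1 * C3 * h ^ (k + min k 3 - 2) * N * e0N := by
            rw [← h5]; exact add_le_add hu (hpsi.trans h4)
        _ = (C2 + C1 * C3) * h ^ (k + min k 3 - 2) * N * e0N := by ring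
    have := le_of_mul_le_mul_right (by nlinarith [key] : e0N * e0N ≤ ((C2 + C1 * C3) * h ^ (k + min k 3 - 2) * N) * e0N) h0
    linarith
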